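/- arXiv:2305.16094 — 5 statements merged into one kernel-verified Lean document; each statement's English description precedes it below -/
import Mathlib

section
/- Let θ : ℝ → ℝ^μ be a curve of critical points of the perturbed empirical risk: for every ε in a neighborhood of 0, ∇R(θ(ε)) + ε·∇ℓ_p(θ(ε)) = 0, where R : ℝ^μ → ℝ is twice continuously differentiable, ℓ_p : ℝ^μ → ℝ is continuously differentiable, θ is differentiable at 0, and the Hessian H = ∇²R(θ(0)) is invertible. Let ℓ_t : ℝ^μ → ℝ be differentiable at θ(0). Then the function ε ↦ ℓ_t(θ(ε)) is differentiable at 0 with derivative equal to −∇ℓ_t(θ(0))ᵀ · H⁻¹ · ∇ℓ_p(θ(0)). -/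
/-!
Differentiating the critical-point equation `DR(θ ε) + ε • Dℓp(θ ε) = 0` at `ε = 0` gives
`D²R(θ 0) θ'(0) = -Dℓp(θ 0)`. In coordinates, and using the symmetry of the second derivative
of the `C²` function `R`, this is `H θ'(0) = -∇ℓp(θ 0)`, so `θ'(0) = -H⁻¹ ∇ℓp(θ 0)`; the chain
rule for `ℓt` then gives the derivative `∇ℓt(θ 0) ⬝ θ'(0)`.
-/

open Matrix Topology

theorem ContinuousLinearMap.apply_eq_dotProduct_of_apply_single {ι R : Type*} [Fintype ι]
    [DecidableEq ι] [CommSemiring R] [TopologicalSpace R] (L : (ι → R) →L[R] R) {g : ι → R}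
    (hg : ∀ i, g i = L (Pi.single i 1)) (v : ι → R) : L v = g ⬝ᵥ v := by
  conv_lhs => rw [pi_eq_sum_univ' v]
  simp [map_sum, dotProduct, hg, mul_comm]

theorem hasDerivAt_smul_self_of_continuousAt {𝕜 F : Type*} [NontriviallyNormedField 𝕜]
    [NormedAddCommGroup F] [NormedSpace 𝕜 F] {f : 𝕜 → F} (hf : ContinuousAt f 0) :
    HasDerivAt (fun ε => ε • f ε) (f 0) 0 := by
  rw [hasDerivAt_iff_tendsto_slope]
  refine hf.continuousWithinAt.tendsto.congr' ?_
  filter_upwards [self_mem_nhdsWithin] with ε (hε : ε ≠ 0)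
  simp [slope, hε]

theorem HasFDerivAt.apply_eq_neg_of_eventually_add_smul_eq_zero {𝕜 E F : Type*}
    [NontriviallyNormedField 𝕜] [NormedAddCommGroup E] [NormedSpace 𝕜 E]
    [NormedAddCommGroup F] [NormedSpace 𝕜 F] {G P : E → F} {G' : E →L[𝕜] F} {θ : 𝕜 → E} {v : E}
    (hG : HasFDerivAt G G' (θ 0)) (hθ : HasDerivAt θ v 0)
    (hP : ContinuousAt (fun ε => P (θ ε)) 0)
    (hcrit : ∀ᶠ ε in 𝓝 0, G (θ ε) + ε • P (θ ε) = 0) : G' v = -P (θ 0) := by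
  have hsum := (hG.comp_hasDerivAt 0 hθ).add (hasDerivAt_smul_self_of_continuousAt hP)
  have hzero : HasDerivAt (fun ε => G (θ ε) + ε • P (θ ε)) 0 0 :=
    (hasDerivAt_const (0 : 𝕜) (0 : F)).congr_of_eventuallyEq hcrit
  exact eq_neg_of_add_eq_zero_left (hsum.unique hzero)

/-- The rigorous core of the influence-function formula
`I_loss(θ̂, z_t, z_p) = −∇ℓ_t(θ̂)ᵀ H⁻¹ ∇ℓ_p(θ̂)`. -/
theorem influence_loss_formula {μ : ℕ}
    (θ : ℝ → (Fin μ → ℝ)) (R ℓp ℓt : (Fin μ → ℝ) → ℝ)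
    (gradR gradℓp gradℓt : (Fin μ → ℝ) → (Fin μ → ℝ))
    (hgradR : ∀ x i, gradR x i = fderiv ℝ R x (Pi.single i 1))
    (hgradℓp : ∀ x i, gradℓp x i = fderiv ℝ ℓp x (Pi.single i 1))
    (hgradℓt : ∀ x i, gradℓt x i = fderiv ℝ ℓt x (Pi.single i 1))
    (hR : ContDiff ℝ 2 R) (hℓp : ContDiff ℝ 1 ℓp)
    (hℓt : DifferentiableAt ℝ ℓt (θ 0))
    (hθ : DifferentiableAt ℝ θ 0)
    (hcrit : ∀ᶠ ε in nhds (0 : ℝ), gradR (θ ε) + ε • gradℓp (θ ε) = 0)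
    (H : Matrix (Fin μ) (Fin μ) ℝ)
    (hH : ∀ i j, H i j = fderiv ℝ (fun x => gradR x j) (θ 0) (Pi.single i 1))
    (hHinv : IsUnit H) :
    HasDerivAt (fun ε => ℓt (θ ε))
      (-(gradℓt (θ 0) ⬝ᵥ H⁻¹.mulVec (gradℓp (θ 0)))) 0 := by
  set B := fderiv ℝ (fderiv ℝ R) (θ 0)
  have hB : HasFDerivAt (fderiv ℝ R) B (θ 0) :=
    ((hR.fderiv_right (m := 1) le_rfl).differentiable one_ne_zero _).hasFDerivAt
  have hsymm : IsSymmSndFDerivAt ℝ R (θ 0) := hR.contDiffAt.isSymmSndFDerivAt (by simp)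
  have hHB : ∀ i j, H i j = B (Pi.single i 1) (Pi.single j 1) := by
    intro i j
    rw [hH, show (fun x => gradR x j) = fun x => fderiv ℝ R x (Pi.single j 1) from
      funext fun x => hgradR x j, (hB.clm_apply (hasFDerivAt_const _ _)).fderiv]
    simp
  have hcrit' : ∀ᶠ ε in 𝓝 0, fderiv ℝ R (θ ε) + ε • fderiv ℝ ℓp (θ ε) = 0 := by
    filter_upwards [hcrit] with ε hε
    ext v
    rw [ContinuousLinearMap.apply_eq_dotProduct_of_apply_single _
      (g := gradR (θ ε) + ε • gradℓp (θ ε)) (by simp [hgradR, hgradℓp]) v, hε, zero_dotProduct]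
    rfl
  have hlin : B (deriv θ 0) = -fderiv ℝ ℓp (θ 0) :=
    hB.apply_eq_neg_of_eventually_add_smul_eq_zero hθ.hasDerivAt
      ((hℓp.continuous_fderiv one_ne_zero).continuousAt.comp hθ.continuousAt) hcrit'
  have hHv : H *ᵥ deriv θ 0 = -gradℓp (θ 0) := by
    funext i
    calc (H *ᵥ deriv θ 0) i = B (Pi.single i 1) (deriv θ 0) :=
          ((B _).apply_eq_dotProduct_of_apply_single (hHB i) _).symm
      _ = B (deriv θ 0) (Pi.single i 1) := hsymm _ _
      _ = -gradℓp (θ 0) i := by rw [hlin, hgradℓp]; rfl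
  have hv : deriv θ 0 = -(H⁻¹ *ᵥ gradℓp (θ 0)) := by
    rw [← mulVec_neg, ← hHv, mulVec_mulVec,
      nonsing_inv_mul H ((isUnit_iff_isUnit_det H).mp hHinv), one_mulVec]
  have hchain := hℓt.hasFDerivAt.comp_hasDerivAt 0 hθ.hasDerivAt
  rwa [(fderiv ℝ ℓt (θ 0)).apply_eq_dotProduct_of_apply_single (hgradℓt (θ 0)), hv,
    dotProduct_neg] at hchain
end

section
/- Let Q = [[Q_C, α], [β, γ]] be a μ×μ real orthogonal matrix with Q_C of size μ_C×μ_C, let Λ_C and Λ_F be invertible diagonal matrices of sizes μ_C×μ_C and (μ−μ_C)×(μ−μ_C), and set H = Qᵀ diag(Λ_C, Λ_F) Q. Let H_C = Q_CᵀΛ_CQ_C + βᵀΛ_Fβ (the top-left μ_C×μ_C block of H) be invertible. Given vectors g_t, g_p ∈ ℝ^{μ_C} and f_t, f_p ∈ ℝ^{μ−μ_C}, define the full gradient vectors G_t = (g_t, f_t) and G_p = (g_p, f_p), the influence value I_loss = −G_tᵀ H⁻¹ G_p, and the classification influence value I_loss^C = −g_tᵀ H_C⁻¹ g_p. Define T₁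 = βᵀΛ_Fβ, F₁ = βᵀΛ_F⁻¹β, F₂ = Q_CᵀΛ_C⁻¹α + βᵀΛ_F⁻¹γ, F₃ = αᵀΛ_C⁻¹α + γᵀΛ_F⁻¹γ, and T₂ = g_tᵀF₁g_p + g_tᵀF₂f_p + f_tᵀF₂ᵀg_p + f_tᵀF₃f_p. If I_loss ≠ 0 and the denominator below is nonzero, then I_loss^C / I_loss = [g_tᵀ (Q_CᵀΛ_CQ_C + T₁)⁻¹ g_p] / [g_tᵀ Q_CᵀΛ_C⁻¹Q_C g_p + T₂]. -/
open Matrix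

/-- Theorem 1 (On the Accuracy of Classification Influence Functions):
the ratio of the classification influence value to the full influence value. -/
theorem classification_influence_ratio {μC μF : ℕ}
    (QC : Matrix (Fin μC) (Fin μC) ℝ) (α : Matrix (Fin μC) (Fin μF) ℝ)
    (β : Matrix (Fin μF) (Fin μC) ℝ) (γ : Matrix (Fin μF) (Fin μF) ℝ)
    (dC : Fin μC → ℝ) (dF : Fin μF → ℝ)
    (hdC : ∀ i, dC i ≠ 0) (hdF : ∀ i, dF i ≠ 0)
    (Q : Matrix (Fin μC ⊕ Fin μF) (Fin μC ⊕ Fin μF) ℝ)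
    (hQ : Q = fromBlocks QC α β γ)
    (horth : Qᵀ * Q = 1)
    (H : Matrix (Fin μC ⊕ Fin μF) (Fin μC ⊕ Fin μF) ℝ)
    (hH : H = Qᵀ * fromBlocks (diagonal dC) 0 0 (diagonal dF) * Q)
    (HC : Matrix (Fin μC) (Fin μC) ℝ)
    (hHC : HC = QCᵀ * diagonal dC * QC + βᵀ * diagonal dF * β)
    (hHCinv : IsUnit HC)
    (gt gp : Fin μC → ℝ) (ft fp : Fin μF → ℝ)
    (Gt Gp : Fin μC ⊕ Fin μF → ℝ)
    (hGt : Gt = Sum.elim gt ft) (hGp : Gp = Sum.elim gp fp)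
    (Iloss IlossC : ℝ)
    (hIloss : Iloss = -(Gt ⬝ᵥ H⁻¹.mulVec Gp))
    (hIlossC : IlossC = -(gt ⬝ᵥ HC⁻¹.mulVec gp))
    (T1 : Matrix (Fin μC) (Fin μC) ℝ) (hT1 : T1 = βᵀ * diagonal dF * β)
    (F1 : Matrix (Fin μC) (Fin μC) ℝ) (hF1 : F1 = βᵀ * (diagonal dF)⁻¹ * β)
    (F2 : Matrix (Fin μC) (Fin μF) ℝ)
    (hF2 : F2 = QCᵀ * (diagonal dC)⁻¹ * α + βᵀ * (diagonal dF)⁻¹ * γ)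
    (F3 : Matrix (Fin μF) (Fin μF) ℝ)
    (hF3 : F3 = αᵀ * (diagonal dC)⁻¹ * α + γᵀ * (diagonal dF)⁻¹ * γ)
    (T2 : ℝ)
    (hT2 : T2 = gt ⬝ᵥ F1.mulVec gp + gt ⬝ᵥ F2.mulVec fp +
      ft ⬝ᵥ F2ᵀ.mulVec gp + ft ⬝ᵥ F3.mulVec fp)
    (hIloss_ne : Iloss ≠ 0)
    (hden_ne : gt ⬝ᵥ (QCᵀ * (diagonal dC)⁻¹ * QC).mulVec gp + T2 ≠ 0) :
    IlossC / Iloss =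
      (gt ⬝ᵥ ((QCᵀ * diagonal dC * QC + T1)⁻¹).mulVec gp) /
      (gt ⬝ᵥ (QCᵀ * (diagonal dC)⁻¹ * QC).mulVec gp + T2) := by
  -- Q is invertible with inverse Qᵀ
  have hQQt : Q * Qᵀ = 1 := mul_eq_one_comm.mp horth
  have hDC : diagonal dC * (diagonal dC)⁻¹ = 1 :=
    Matrix.mul_nonsing_inv _ (by
      rw [Matrix.det_diagonal]
      exact isUnit_iff_ne_zero.mpr (Finset.prod_ne_zero_iff.mpr fun i _ => hdC i))
  have hDF : diagonal dF * (diagonal dF)⁻¹ = 1 :=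
    Matrix.mul_nonsing_inv _ (by
      rw [Matrix.det_diagonal]
      exact isUnit_iff_ne_zero.mpr (Finset.prod_ne_zero_iff.mpr fun i _ => hdF i))
  -- H⁻¹
  have hHinv : H⁻¹ = Qᵀ * fromBlocks (diagonal dC)⁻¹ 0 0 (diagonal dF)⁻¹ * Q := by
    apply Matrix.inv_eq_right_inv
    rw [hH]
    simp only [Matrix.mul_assoc]
    rw [← Matrix.mul_assoc Q Qᵀ, hQQt, Matrix.one_mul,
      ← Matrix.mul_assoc (fromBlocks (diagonal dC) 0 0 (diagonal dF)),
      Matrix.fromBlocks_multiply]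
    simp only [Matrix.mul_zero, Matrix.zero_mul, add_zero, zero_add, hDC, hDF]
    rw [Matrix.fromBlocks_one, Matrix.one_mul, horth]
  -- the inverse as explicit blocks
  have hblocks : H⁻¹ = fromBlocks (QCᵀ * (diagonal dC)⁻¹ * QC + F1) F2 F2ᵀ F3 := by
    rw [hHinv, hQ, Matrix.fromBlocks_transpose, Matrix.fromBlocks_multiply,
      Matrix.fromBlocks_multiply, hF1, hF2, hF3]
    simp [Matrix.transpose_add, Matrix.transpose_mul, Matrix.transpose_nonsing_inv,
      Matrix.diagonal_transpose, Matrix.mul_assoc]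
  have hnum : IlossC = -(gt ⬝ᵥ ((QCᵀ * diagonal dC * QC + T1)⁻¹).mulVec gp) := by
    rw [hIlossC, hT1, ← hHC]
  have hden : Iloss = -(gt ⬝ᵥ (QCᵀ * (diagonal dC)⁻¹ * QC).mulVec gp + T2) := by
    rw [hIloss, hblocks, hGt, hGp]
    rw [Matrix.fromBlocks_mulVec]
    simp only [Sum.elim_comp_inl, Sum.elim_comp_inr]
    rw [Matrix.dotProduct_block]
    simp only [Sum.elim_inl, Sum.elim_inr, Sum.elim_comp_inl, Sum.elim_comp_inr]
    rw [hT2]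
    simp [dotProduct_add, Matrix.add_mulVec, dotProduct_add]
    ring
  rw [hnum, hden, neg_div_neg_eq]
end

section
/- Let μ ≥ 1, let λ_1,…,λ_μ be strictly positive reals with minimum λ_min, and let χ = (χ_1,…,χ_μ) and ψ = (ψ_1,…,ψ_μ) be real vectors with ψ ≠ 0. Let P be a finite nonempty family of vectors χ^{(p)} ∈ ℝ^μ containing χ, for each p define T⁺(χ^{(p)}) = Σ_{i : χ^{(p)}_i ψ_i ≥ 0} χ^{(p)}_i ψ_i, and let 𝒯⁺ = min over p ∈ P of T⁺(χ^{(p)}). If −Σ_{i=1}^{μ} λ_i χ_i ψ_i > 0, then Σ_{i=1}^{μ} λ_i |χ_i| > (𝒯⁺ · λ_min) / (max_i |ψ_i|). -/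
/-- Theorem 3, first statement (On a training point being memorizable):
a positive influence value implies the point is `D⁺`-memorizable. -/
theorem memorizable_of_pos_influence {μ : ℕ} (hμ : 1 ≤ μ)
    (lam : Fin μ → ℝ) (hlam : ∀ i, 0 < lam i)
    (lamMin : ℝ)
    (hlamMin : lamMin = Finset.univ.inf'
      (Finset.univ_nonempty_iff.mpr (Fin.pos_iff_nonempty.mp hμ)) lam)
    (χ ψ : Fin μ → ℝ) (hψ : ψ ≠ 0)
    (P : Finset (Fin μ → ℝ)) (hPne : P.Nonempty) (hχP : χ ∈ P)
    (Tplus : (Fin μ → ℝ) → ℝ)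
    (hTplus : ∀ v, Tplus v = ∑ i, if 0 ≤ v i * ψ i then v i * ψ i else 0)
    (𝒯plus : ℝ)
    (h𝒯plus : 𝒯plus = (P.image Tplus).min' (hPne.image Tplus))
    (hinfl : 0 < -∑ i, lam i * χ i * ψ i) :
    ∑ i, lam i * |χ i| >
      (𝒯plus * lamMin) /
        (Finset.univ.sup'
          (Finset.univ_nonempty_iff.mpr (Fin.pos_iff_nonempty.mp hμ))
          (fun i => |ψ i|)) := by
  have hne := Finset.univ_nonempty_iff.mpr (Fin.pos_iff_nonempty.mp hμ)
  set M := Finset.univ.sup' hne (fun i => |ψ i|) with hMdef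
  obtain ⟨j, hj⟩ : ∃ j, ψ j ≠ 0 := by
    by_contra h; push_neg at h; exact hψ (funext h)
  have hMpos : 0 < M :=
    lt_of_lt_of_le (abs_pos.mpr hj) (Finset.le_sup' (fun i => |ψ i|) (Finset.mem_univ j))
  have hlmin_le : ∀ i, lamMin ≤ lam i := fun i => by
    rw [hlamMin]; exact Finset.inf'_le _ (Finset.mem_univ i)
  have hlmin_pos : 0 < lamMin := by
    rw [hlamMin]; exact (Finset.lt_inf'_iff _).mpr (fun i _ => hlam i)
  have h1 : 𝒯plus ≤ Tplus χ := by
    rw [h𝒯plus]; exact Finset.min'_le _ _ (Finset.mem_image_of_mem _ hχP)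
  rw [gt_iff_lt, div_lt_iff₀ hMpos]
  calc 𝒯plus * lamMin ≤ Tplus χ * lamMin :=
        mul_le_mul_of_nonneg_right h1 hlmin_pos.le
    _ ≤ ∑ i, (if 0 ≤ χ i * ψ i then lam i * (χ i * ψ i) else 0) := by
        rw [hTplus, Finset.sum_mul]
        apply Finset.sum_le_sum
        intro i _
        split
        · next h => nlinarith [hlmin_le i]
        · simp
    _ < (∑ i, (if 0 ≤ χ i * ψ i then lam i * (χ i * ψ i) else 0))
          + (-∑ i, lam i * χ i * ψ i) := lt_add_of_pos_right _ hinfl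
    _ = ∑ i, ((if 0 ≤ χ i * ψ i then lam i * (χ i * ψ i) else 0) - lam i * χ i * ψ i) := by
        rw [Finset.sum_sub_distrib]; ring
    _ ≤ ∑ i, lam i * |χ i| * M := by
        apply Finset.sum_le_sum
        intro i _
        have habs : |ψ i| ≤ M := Finset.le_sup' (fun i => |ψ i|) (Finset.mem_univ i)
        have hχa : χ i ≤ |χ i| := le_abs_self _
        have hψa : ψ i ≤ |ψ i| := le_abs_self _
        have hψb : -(ψ i) ≤ |ψ i| := neg_le_abs _
        split
        · next h =>
          have : lam i * (χ i * ψ i) - lam i * χ i * ψ i = 0 := by ring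
          rw [this]
          exact mul_nonneg (mul_nonneg (hlam i).le (abs_nonneg _)) hMpos.le
        · next h =>
          push_neg at h
          simp only [zero_sub]
          have h2 : -(χ i * ψ i) ≤ |χ i| * |ψ i| := by
            rw [← abs_mul]; exact neg_le_abs _
          have h3 : |χ i| * |ψ i| ≤ |χ i| * M :=
            mul_le_mul_of_nonneg_left habs (abs_nonneg _)
          nlinarith [(hlam i).le, abs_nonneg (χ i)]
    _ = (∑ i, lam i * |χ i|) * M := by rw [Finset.sum_mul]
end

section
/- Let μ ≥ 1, let λ_1,…,λ_μ be strictly positive reals with minimum λ_min, and let χ = (χ_1,…,χ_μ) and ψ = (ψ_1,…,ψ_μ) be real vectors with ψ ≠ 0. Let P be a finite nonempty family of vectors χ^{(p)} ∈ ℝ^μ containing χ, for each p define T⁻(χ^{(p)}) = −Σ_{i : χ^{(p)}_i ψ_i < 0} χ^{(p)}_i ψ_i, and let 𝒯⁻ = min over p ∈ P of T⁻(χ^{(p)}). If −Σ_{i=1}^{μ} λ_i χ_i ψ_i < 0, then Σ_{i=1}^{μ} λ_i |χ_i| > (𝒯⁻ · λ_min) / (max_i |ψ_i|). -/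
/-- Theorem 3, second statement (On a training point being memorizable):
a negative influence value implies the point is `D⁻`-memorizable. -/
theorem memorizable_of_neg_influence {μ : ℕ} (hμ : 1 ≤ μ)
    (lam : Fin μ → ℝ) (hlam : ∀ i, 0 < lam i)
    (lamMin : ℝ)
    (hlamMin : lamMin = Finset.univ.inf'
      (Finset.univ_nonempty_iff.mpr (Fin.pos_iff_nonempty.mp hμ)) lam)
    (χ ψ : Fin μ → ℝ) (hψ : ψ ≠ 0)
    (P : Finset (Fin μ → ℝ)) (hPne : P.Nonempty) (hχP : χ ∈ P)
    (Tminus : (Fin μ → ℝ) → ℝ)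
    (hTminus : ∀ v, Tminus v = -∑ i, if v i * ψ i < 0 then v i * ψ i else 0)
    (𝒯minus : ℝ)
    (h𝒯minus : 𝒯minus = (P.image Tminus).min' (hPne.image Tminus))
    (hinfl : -∑ i, lam i * χ i * ψ i < 0) :
    ∑ i, lam i * |χ i| >
      (𝒯minus * lamMin) /
        (Finset.univ.sup'
          (Finset.univ_nonempty_iff.mpr (Fin.pos_iff_nonempty.mp hμ))
          (fun i => |ψ i|)) := by
  have hne : (Finset.univ : Finset (Fin μ)).Nonempty :=
    Finset.univ_nonempty_iff.mpr (Fin.pos_iff_nonempty.mp hμ)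
  set M := Finset.univ.sup' hne (fun i => |ψ i|) with hMdef
  obtain ⟨j, hj⟩ : ∃ j, ψ j ≠ 0 := by
    by_contra h; push_neg at h; exact hψ (funext h)
  have hM : 0 < M :=
    lt_of_lt_of_le (abs_pos.mpr hj) (Finset.le_sup' (fun i => |ψ i|) (Finset.mem_univ j))
  have hMi : ∀ i, |ψ i| ≤ M := fun i =>
    Finset.le_sup' (fun i => |ψ i|) (Finset.mem_univ i)
  have hlmin : 0 < lamMin := by
    rw [hlamMin]; exact (Finset.lt_inf'_iff hne).mpr (fun i _ => hlam i)
  have hlmin_le : ∀ i, lamMin ≤ lam i := by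
    intro i; rw [hlamMin]; exact Finset.inf'_le lam (Finset.mem_univ i)
  have hTle : 𝒯minus ≤ Tminus χ := by
    rw [h𝒯minus]
    exact Finset.min'_le _ _ (Finset.mem_image_of_mem Tminus hχP)
  -- rewrite Tminus χ as a sum of nonneg terms
  have hTχ : Tminus χ = ∑ i, max (-(χ i * ψ i)) 0 := by
    rw [hTminus, ← Finset.sum_neg_distrib]
    refine Finset.sum_congr rfl (fun i _ => ?_)
    rcases le_or_gt 0 (χ i * ψ i) with h | h
    · rw [if_neg (not_lt.mpr h), max_eq_right (by linarith), neg_zero]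
    · rw [if_pos h, max_eq_left (by linarith)]
  have hS : 0 < ∑ i, lam i * χ i * ψ i := by linarith
  -- key chain
  have h1 : lamMin * Tminus χ ≤ ∑ i, lam i * max (-(χ i * ψ i)) 0 := by
    rw [hTχ, Finset.mul_sum]
    refine Finset.sum_le_sum (fun i _ => ?_)
    exact mul_le_mul_of_nonneg_right (hlmin_le i) (le_max_right _ _)
  have h2 : (∑ i, lam i * max (-(χ i * ψ i)) 0) + (∑ i, lam i * χ i * ψ i)
      ≤ M * ∑ i, lam i * |χ i| := by
    rw [← Finset.sum_add_distrib, Finset.mul_sum]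
    refine Finset.sum_le_sum (fun i _ => ?_)
    have h3 : lam i * max (-(χ i * ψ i)) 0 + lam i * χ i * ψ i
        ≤ lam i * |χ i * ψ i| := by
      have : max (-(χ i * ψ i)) 0 + χ i * ψ i ≤ |χ i * ψ i| := by
        rcases le_or_gt 0 (χ i * ψ i) with h | h
        · rw [max_eq_right (by linarith), abs_of_nonneg h]; linarith
        · rw [max_eq_left (by linarith), abs_of_neg h]; linarith
      nlinarith [(hlam i).le]
    have h4 : lam i * |χ i * ψ i| ≤ M * (lam i * |χ i|) := by
      rw [abs_mul, ← mul_assoc]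
      calc lam i * |χ i| * |ψ i| ≤ lam i * |χ i| * M :=
            mul_le_mul_of_nonneg_left (hMi i) (mul_nonneg (hlam i).le (abs_nonneg _))
        _ = M * (lam i * |χ i|) := mul_comm _ _
    linarith
  have hkey : 𝒯minus * lamMin < (∑ i, lam i * |χ i|) * M := by
    have := mul_le_mul_of_nonneg_left hTle hlmin.le
    nlinarith
  rw [gt_iff_lt, div_lt_iff₀ hM]
  exact hkey
end

section
/- Fix D ≥ 1 and labels y_t, y_p ∈ {0, 1}. Let u^{(t)}, u^{(p)} ∈ ℝ^D have strictly positive components, let (w,b) ∈ ℝ^D × ℝ, and let g^{(t)}, g^{(p)} ∈ ℝ^{D+1} be the binary cross entropy loss gradients of the single linear layer classifier at (u^{(t)}, y_t) and (u^{(p)}, y_p): g_i = (−y + sigm(Σ_k w_k u_k + b))·u_i for i < D and g_D = −y + sigm(Σ_k w_k u_k + b), with sigm(x) = 1/(1+e^{−x}). Let M be a (D+1)×(D+1) real matrix all of whose entries are nonnegative, and define the influence value I = −(g^{(t)})ᵀ M g^{(p)}. Then: if y_t = y_p, I ≤ 0, and if y_t ≠ y_p, I ≥ 0. -/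
open Matrix

/-- Core of Theorem 4 (On the correlation between influence values and
labels): with a nonnegative matrix `M` in place of the inverse classifier
Hessian, the influence value `I = −g_tᵀ M g_p` is nonpositive when the labels
agree and nonnegative when they differ. -/
theorem influence_label_correlation {D : ℕ} (hD : 1 ≤ D)
    (yt yp : ℝ) (hyt : yt = 0 ∨ yt = 1) (hyp : yp = 0 ∨ yp = 1)
    (ut up : Fin D → ℝ) (hut : ∀ i, 0 < ut i) (hup : ∀ i, 0 < up i)
    (w : Fin D → ℝ) (b : ℝ)
    (sigm : ℝ → ℝ) (hsigm : ∀ x, sigm x = 1 / (1 + Real.exp (-x)))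
    (ft fp : ℝ) (hft : ft = ∑ i, w i * ut i + b) (hfp : fp = ∑ i, w i * up i + b)
    (gt gp : Fin (D + 1) → ℝ)
    (hgt : ∀ i : Fin D, gt i.castSucc = (-yt + sigm ft) * ut i)
    (hgtD : gt (Fin.last D) = -yt + sigm ft)
    (hgp : ∀ i : Fin D, gp i.castSucc = (-yp + sigm fp) * up i)
    (hgpD : gp (Fin.last D) = -yp + sigm fp)
    (M : Matrix (Fin (D + 1)) (Fin (D + 1)) ℝ) (hM : ∀ i j, 0 ≤ M i j)
    (I : ℝ) (hI : I = -(gt ⬝ᵥ M.mulVec gp)) :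
    (yt = yp → I ≤ 0) ∧ (yt ≠ yp → 0 ≤ I) := by
  have hs : ∀ x, 0 < sigm x ∧ sigm x < 1 := by
    intro x
    rw [hsigm]
    have h := Real.exp_pos (-x)
    constructor
    · positivity
    · rw [div_lt_one (by linarith)]; linarith
  set a := -yt + sigm ft with ha
  set c := -yp + sigm fp with hc
  set vt : Fin (D + 1) → ℝ := Fin.lastCases 1 ut with hvt
  set vp : Fin (D + 1) → ℝ := Fin.lastCases 1 up with hvp
  have hgt' : ∀ i, gt i = a * vt i := by
    intro i
    induction i using Fin.lastCases with
    | last => simp [hvt, hgtD, ha]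
    | cast j => simp [hvt, hgt j]
  have hgp' : ∀ i, gp i = c * vp i := by
    intro i
    induction i using Fin.lastCases with
    | last => simp [hvp, hgpD, hc]
    | cast j => simp [hvp, hgp j]
  have hvtpos : ∀ i, 0 ≤ vt i := by
    intro i
    induction i using Fin.lastCases with
    | last => simp [hvt]
    | cast j => simp [hvt]; exact (hut j).le
  have hvppos : ∀ i, 0 ≤ vp i := by
    intro i
    induction i using Fin.lastCases with
    | last => simp [hvp]
    | cast j => simp [hvp]; exact (hup j).le
  have hSnn : 0 ≤ ∑ i, ∑ j, vt i * (M i j * vp j) := by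
    apply Finset.sum_nonneg
    intro i _
    apply Finset.sum_nonneg
    intro j _
    exact mul_nonneg (hvtpos i) (mul_nonneg (hM i j) (hvppos j))
  have hdot : gt ⬝ᵥ M.mulVec gp = (a * c) * ∑ i, ∑ j, vt i * (M i j * vp j) := by
    simp only [dotProduct, Matrix.mulVec, dotProduct, Finset.mul_sum]
    apply Finset.sum_congr rfl
    intro i _
    apply Finset.sum_congr rfl
    intro j _
    rw [hgt' i, hgp' j]
    ring
  have hsft := hs ft
  have hsfp := hs fp
  constructor
  · intro h
    have hac : 0 ≤ a * c := by
      rcases hyt with h1 | h1 <;> rcases hyp with h2 | h2 <;>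
        simp [ha, hc, h1, h2] <;> nlinarith [hsft.1, hsft.2, hsfp.1, hsfp.2]
    rw [hI, hdot]
    nlinarith
  · intro h
    have hac : a * c ≤ 0 := by
      rcases hyt with h1 | h1 <;> rcases hyp with h2 | h2 <;>
        first
          | (exfalso; exact h (h1.trans h2.symm))
          | (simp [ha, hc, h1, h2]; nlinarith [hsft.1, hsft.2, hsfp.1, hsfp.2])
    rw [hI, hdot]
    nlinarith
end
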